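/- Let w be a word over Σ with ι(w) = k ≥ 1 and let s ∈ ℕ. Then ι(w^s) − ι(w^{s−1}) = k + 1 if and only if alph(r(w^{s−1})·r(w^R)) = Σ. -/

import Mathlib

open List

variable {α : Type*}

/-- `w` is `k`-universal: every word of length `k` over the alphabet `α`
is a scattered factor (subsequence) of `w`. -/
def IsUniversal [Fintype α] (k : ℕ) (w : List α) : Prop :=
  ∀ u : List α, u.length = k → u.Sublist w

/-- The universality index `ι(w)`: the largest `k` such that `w` is `k`-universal. -/
noncomputable def univIndex [Fintype α] (w : List α) : ℕ :=
  sSup {k | IsUniversal k w}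

/-- The circular universality index `ζ(w)`: the largest `k` such that some
conjugate of `w` is `k`-universal. -/
noncomputable def circIndex [Fintype α] (w : List α) : ℕ :=
  sSup {k | ∃ u v : List α, w = u ++ v ∧ IsUniversal k (v ++ u)}

/-- `wpow w s = w^s`, the `s`-fold concatenation of `w`. -/
def wpow (w : List α) (s : ℕ) : List α := (List.replicate s w).flatten

/-- Auxiliary (fuelled) computation of the remainder of the arch factorisation:
greedily remove the shortest prefix containing every letter of the alphabet. -/
def remAux [Fintype α] [DecidableEq α] : ℕ → List α → List α
  | 0, w => w
  | (n+1), w =>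
    match (List.range' 1 w.length).find?
        (fun m => decide ((w.take m).toFinset = Finset.univ)) with
    | none => w
    | some m => remAux n (w.drop m)

/-- `rem w = r(w)`, the remainder of the arch factorisation of `w`. -/
def rem [Fintype α] [DecidableEq α] (w : List α) : List α := remAux w.length w

/-- Auxiliary (fuelled) computation of the list of arches of `w`. -/
def archesAux [Fintype α] [DecidableEq α] : ℕ → List α → List (List α)
  | 0, _ => []
  | (n+1), w =>
    match (List.range' 1 w.length).find?
        (fun m => decide ((w.take m).toFinset = Finset.univ)) with
    | none => []
    | some m => (w.take m) :: archesAux n (w.drop m)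

/-- `arches w`: the list `[arch₁(w), …, arch_{ι(w)}(w)]` of arches of `w`. -/
def arches [Fintype α] [DecidableEq α] (w : List α) : List (List α) :=
  archesAux w.length w

/-!
The universality index is additive along the arch factorisation: `ι(uv) = ι(u) + ι(r(u) v)`,
because an arch in front of a word raises its index by exactly one. Applied to
`w^s = w^(s-1) w` and then, after reversing, to `(r(w^(s-1)) w)^R = w^R r(w^(s-1))^R`, this gives
`ι(w^s) = ι(w^(s-1)) + k + ι(r(w^R) r(w^(s-1))^R)`. Both factors of the last word miss a letter,
so its index is at most one, and it is one exactly when together they contain every letter.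
-/

namespace List

theorem cons_sublist_append_iff_of_notMem {c : α} {u x y : List α} (hc : c ∉ x) :
    c :: u <+ x ++ y ↔ c :: u <+ y := by
  induction x with
  | nil => rfl
  | cons a x ih =>
    rw [mem_cons, not_or] at hc
    rw [cons_append, sublist_cons_iff, ih hc.2]
    simp [hc.1]

end List

section Universality

variable [Fintype α] {w : List α} {k m : ℕ}

theorem isUniversal_zero (w : List α) : IsUniversal 0 w := fun u hu => by
  rw [List.length_eq_zero_iff.1 hu]
  exact nil_sublist w

theorem isUniversal_one_iff : IsUniversal 1 w ↔ ∀ c, c ∈ w := by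
  simp [IsUniversal, List.length_eq_one_iff]

theorem IsUniversal.mono (h : IsUniversal k w) (hm : m ≤ k) : IsUniversal m w := by
  rintro (_ | ⟨c, u⟩) hu
  · exact nil_sublist w
  · refine (sublist_append_left _ (replicate (k - m) c)).trans (h _ ?_)
    simp only [length_append, hu, length_replicate]
    omega

theorem IsUniversal.le_length [Nonempty α] (h : IsUniversal k w) : k ≤ w.length := by
  simpa using (h (replicate k (Classical.arbitrary α)) (length_replicate ..)).length_le

theorem IsUniversal.reverse (h : IsUniversal k w) : IsUniversal k w.reverse := fun u hu =>
  reverse_reverse u ▸ (h u.reverse (by simpa)).reverse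

theorem isUniversal_reverse : IsUniversal k w.reverse ↔ IsUniversal k w :=
  ⟨fun h => reverse_reverse w ▸ h.reverse, IsUniversal.reverse⟩

theorem bddAbove_setOf_isUniversal [Nonempty α] (w : List α) :
    BddAbove {k | IsUniversal k w} :=
  ⟨w.length, fun _ => IsUniversal.le_length⟩

theorem isUniversal_univIndex [Nonempty α] (w : List α) : IsUniversal (univIndex w) w :=
  Nat.sSup_mem ⟨0, isUniversal_zero w⟩ (bddAbove_setOf_isUniversal w)

theorem isUniversal_iff_le_univIndex [Nonempty α] : IsUniversal k w ↔ k ≤ univIndex w :=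
  ⟨fun h => le_csSup (bddAbove_setOf_isUniversal w) h, (isUniversal_univIndex w).mono⟩

theorem univIndex_eq_of_isUniversal_iff [Nonempty α] {n : ℕ}
    (h : ∀ k, IsUniversal k w ↔ k ≤ n) : univIndex w = n :=
  le_antisymm ((h _).1 (isUniversal_univIndex w))
    (isUniversal_iff_le_univIndex.1 ((h n).2 le_rfl))

theorem univIndex_reverse (w : List α) : univIndex w.reverse = univIndex w := by
  simp only [univIndex, isUniversal_reverse]

theorem nonempty_of_univIndex_ne_zero (h : univIndex w ≠ 0) : Nonempty α := by
  by_contra hα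
  have hall (k : ℕ) : IsUniversal k w
    | [], _ => nil_sublist w
    | c :: _, _ => (hα ⟨c⟩).elim
  exact h (Nat.sSup_of_not_bddAbove fun ⟨b, hb⟩ => by simpa using hb (hall (b + 1)))

theorem univIndex_eq_zero_of_notMem {c : α} (hc : c ∉ w) : univIndex w = 0 := by
  have : Nonempty α := ⟨c⟩
  by_contra h
  exact hc (isUniversal_one_iff.1 (isUniversal_iff_le_univIndex.2 (by omega)) c)

theorem univIndex_append_eq_one_iff {x y : List α} {c d : α} (hx : c ∉ x) (hy : d ∉ y) :
    univIndex (x ++ y) = 1 ↔ ∀ e, e ∈ x ++ y := by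
  have : Nonempty α := ⟨c⟩
  have hlt : univIndex (x ++ y) < 2 := by
    rw [← not_le, ← isUniversal_iff_le_univIndex]
    intro h
    have hcd := h [c, d] rfl
    rw [cons_sublist_append_iff_of_notMem hx] at hcd
    exact hy (hcd.subset (by simp))
  rw [← isUniversal_one_iff, isUniversal_iff_le_univIndex]
  omega

end Universality

section Arches

variable {a v : List α}

/-- An arch: a word containing every letter, no proper prefix of which does. -/
def IsArch (a : List α) : Prop :=
  (∀ c, c ∈ a) ∧ ¬ ∀ c, c ∈ a.dropLast

theorem IsArch.ne_nil (ha : IsArch a) : a ≠ [] := by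
  rintro rfl
  exact ha.2 ha.1

theorem IsArch.exists_eq_append_singleton (ha : IsArch a) : ∃ b x, a = b ++ [x] ∧ x ∉ b := by
  refine ⟨a.dropLast, a.getLast ha.ne_nil, (dropLast_append_getLast ha.ne_nil).symm,
    fun hx => ha.2 fun c => ?_⟩
  have hc := ha.1 c
  rw [← dropLast_append_getLast ha.ne_nil, mem_append, mem_singleton] at hc
  rcases hc with hc | rfl
  exacts [hc, hx]

variable [Fintype α] {k : ℕ}

theorem IsArch.isUniversal_append_succ_iff (ha : IsArch a) :
    IsUniversal (k + 1) (a ++ v) ↔ IsUniversal k v := by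
  constructor
  · obtain ⟨b, x, rfl, hx⟩ := ha.exists_eq_append_singleton
    intro h u hu
    have hxu := h (x :: u) (by simp [hu])
    rwa [append_assoc, singleton_append, cons_sublist_append_iff_of_notMem hx,
      cons_sublist_cons] at hxu
  · rintro h (_ | ⟨c, u⟩) hu
    · simp at hu
    · exact (singleton_sublist.2 (ha.1 c)).append (h u (by simpa using hu))

theorem IsArch.univIndex_append [Nonempty α] (ha : IsArch a) (v : List α) :
    univIndex (a ++ v) = univIndex v + 1 :=
  univIndex_eq_of_isUniversal_iff fun
    | 0 => by simp [isUniversal_zero]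
    | k + 1 => by rw [ha.isUniversal_append_succ_iff, isUniversal_iff_le_univIndex]; omega

end Arches

section Remainder

variable [Fintype α] [DecidableEq α] [Nonempty α]

theorem remAux_succ_cases (n : ℕ) (w : List α) :
    ((∃ c, c ∉ w) ∧ remAux (n + 1) w = w) ∨
      ∃ a w', IsArch a ∧ w = a ++ w' ∧ remAux (n + 1) w = remAux n w' := by
  rcases hF : (range' 1 w.length).find?
      (fun m => decide ((w.take m).toFinset = Finset.univ)) with _ | m
  · refine .inl ⟨?_, by simp only [remAux, hF]⟩
    by_contra! hall
    have hw : w ≠ [] := fun h => by simpa [h] using hall (Classical.arbitrary α)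
    refine find?_eq_none.1 hF w.length ?_ ?_
    · have := length_pos_iff.2 hw
      simp only [mem_range'_1]
      omega
    · simpa [Finset.eq_univ_iff_forall] using hall
  · refine .inr ⟨w.take m, w.drop m, ?_, (take_append_drop m w).symm, by simp only [remAux, hF]⟩
    obtain ⟨hfull, hm, hmin⟩ := find?_range'_eq_some.1 hF
    rw [mem_range'_1] at hm
    have hdrop : (w.take m).dropLast = w.take (m - 1) := by
      rw [dropLast_eq_take, length_take, take_take]
      congr 1
      omega
    refine ⟨by simpa [Finset.eq_univ_iff_forall] using hfull, ?_⟩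
    rw [hdrop]
    rcases Nat.lt_or_ge m 2 with hm2 | hm2
    · obtain rfl : m = 1 := by omega
      simp
    · simpa [Finset.eq_univ_iff_forall] using hmin (m - 1) (by omega) (by omega)

theorem univIndex_append_eq_remAux (n : ℕ) :
    ∀ w v : List α, w.length ≤ n →
      univIndex (w ++ v) = univIndex w + univIndex (remAux n w ++ v) := by
  induction n with
  | zero =>
    intro w v hw
    obtain rfl := length_eq_zero_iff.1 (Nat.le_zero.1 hw)
    simp [remAux, univIndex_eq_zero_of_notMem (not_mem_nil (a := Classical.arbitrary α))]
  | succ n ih =>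
    intro w v hw
    rcases remAux_succ_cases n w with ⟨⟨c, hc⟩, hrem⟩ | ⟨a, w', ha, rfl, hrem⟩
    · rw [hrem, univIndex_eq_zero_of_notMem hc, zero_add]
    · have hlen : w'.length ≤ n := by
        have := length_pos_iff.2 ha.ne_nil
        simp only [length_append] at hw
        omega
      rw [hrem, append_assoc, ha.univIndex_append, ha.univIndex_append, ih w' v hlen]
      omega

theorem exists_notMem_remAux (n : ℕ) : ∀ w : List α, w.length ≤ n → ∃ c, c ∉ remAux n w := by
  induction n with
  | zero =>
    intro w hw
    obtain rfl := length_eq_zero_iff.1 (Nat.le_zero.1 hw)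
    exact ⟨Classical.arbitrary α, not_mem_nil⟩
  | succ n ih =>
    intro w hw
    rcases remAux_succ_cases n w with ⟨hc, hrem⟩ | ⟨a, w', ha, rfl, hrem⟩
    · rwa [hrem]
    · have := length_pos_iff.2 ha.ne_nil
      simp only [length_append] at hw
      exact hrem ▸ ih w' (by omega)

theorem univIndex_append (u v : List α) :
    univIndex (u ++ v) = univIndex u + univIndex (rem u ++ v) :=
  univIndex_append_eq_remAux u.length u v le_rfl

theorem exists_notMem_rem (w : List α) : ∃ c, c ∉ rem w :=
  exists_notMem_remAux w.length w le_rfl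

end Remainder

theorem wpow_succ (w : List α) (n : ℕ) : wpow w (n + 1) = wpow w n ++ w := by
  simp [wpow, replicate_succ']

theorem growth_succ_iff_rem [Fintype α] [DecidableEq α] (w : List α) (k : ℕ)
    (hk : univIndex w = k) (hk1 : 1 ≤ k) (s : ℕ) (hs : 1 ≤ s) :
    univIndex (wpow w s) = univIndex (wpow w (s - 1)) + (k + 1) ↔
      (rem (wpow w (s - 1)) ++ rem w.reverse).toFinset = Finset.univ := by
  have : Nonempty α := nonempty_of_univIndex_ne_zero (w := w) (by omega)
  obtain ⟨c, hc⟩ := exists_notMem_rem (wpow w (s - 1))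
  obtain ⟨d, hd⟩ := exists_notMem_rem w.reverse
  set r := rem (wpow w (s - 1))
  have hpow : wpow w s = wpow w (s - 1) ++ w := by
    rw [← wpow_succ, Nat.sub_add_cancel hs]
  have hrev : univIndex (r ++ w) = k + univIndex (rem w.reverse ++ r.reverse) := by
    rw [← univIndex_reverse, reverse_append, univIndex_append, univIndex_reverse, hk]
  rw [hpow, univIndex_append, hrev, Nat.add_left_cancel_iff, Nat.add_left_cancel_iff,
    univIndex_append_eq_one_iff hd (mt mem_reverse.1 hc), Finset.eq_univ_iff_forall]
  simp [or_comm]
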